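/- Let H be a complex Hilbert space and M, N closed subspaces of H. For the bounded operator S = P_{N^⊥} ∘ P_M on H, the following hold: (1) range(S) = N^⊥ ∩ (M + N); (2) ker(S) = M^⊥ + (M ∩ N); (3) the orthogonal complement of range(S) equals N + (M^⊥ ∩ N^⊥). -/

import Mathlib

/-- The orthogonal projection of a Hilbert space onto a closed subspace,
as a continuous linear operator on the whole space. -/
noncomputable def projCLM {H : Type*} [NormedAddCommGroup H] [InnerProductSpace ℂ H]
    [CompleteSpace H] (W : Submodule ℂ H) (hW : IsClosed (W : Set H)) : H →L[ℂ] H :=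
  haveI : CompleteSpace W := hW.completeSpace_coe
  W.subtypeL.comp W.orthogonalProjectionOnto

/-! For subspaces `K`, `L` admitting orthogonal projections, every `y` splits as
`P_K y + (y - P_K y)` with the second summand in `Kᗮ`, and `P_L` fixes `L` and kills `Lᗮ`;
this describes range and kernel of `P_L ∘ P_K`. The orthogonal complement of the range is the
kernel of the adjoint `P_K ∘ P_L`, which reduces (3) to (2) with the roles of the subspaces
exchanged. -/

namespace Submodule

variable {𝕜 E : Type*} [RCLike 𝕜] [NormedAddCommGroup E] [InnerProductSpace 𝕜 E]
  (K L : Submodule 𝕜 E) [K.HasOrthogonalProjection] [L.HasOrthogonalProjection]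

theorem range_starProjection_comp_starProjection :
    (L.starProjection ∘L K.starProjection).range = L ⊓ (K ⊔ Lᗮ) := by
  apply le_antisymm
  · rintro _ ⟨x, rfl⟩
    have hsplit : L.starProjection (K.starProjection x)
        = K.starProjection x - (K.starProjection x - L.starProjection (K.starProjection x)) := by
      abel
    refine ⟨L.starProjection_apply_mem _, ?_⟩
    rw [ContinuousLinearMap.coe_coe, ContinuousLinearMap.comp_apply, hsplit]
    exact sub_mem (mem_sup_left (K.starProjection_apply_mem x))
      (mem_sup_right (L.sub_starProjection_mem_orthogonal _))
  · rintro y ⟨hyL, hyKL⟩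
    obtain ⟨k, hk, n, hn, rfl⟩ := mem_sup.mp hyKL
    refine ⟨k, ?_⟩
    have hPk : L.starProjection (k + n) = L.starProjection k := by
      rw [map_add, (L.starProjection_apply_eq_zero_iff).mpr hn, add_zero]
    rw [ContinuousLinearMap.coe_coe, ContinuousLinearMap.comp_apply,
      starProjection_eq_self_iff.mpr hk, ← hPk, starProjection_eq_self_iff.mpr hyL]

theorem ker_starProjection_comp_starProjection :
    (L.starProjection ∘L K.starProjection).ker = Kᗮ ⊔ (K ⊓ Lᗮ) := by
  apply le_antisymm
  · intro x hx
    have hPx : K.starProjection x ∈ Lᗮ := (L.starProjection_apply_eq_zero_iff).mp hx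
    rw [← sub_add_cancel x (K.starProjection x)]
    exact add_mem (mem_sup_left (K.sub_starProjection_mem_orthogonal x))
      (mem_sup_right ⟨K.starProjection_apply_mem x, hPx⟩)
  · refine sup_le (fun x hx => ?_) (fun x hx => ?_) <;>
      simp only [LinearMap.mem_ker, ContinuousLinearMap.coe_coe, ContinuousLinearMap.comp_apply]
    · rw [(K.starProjection_apply_eq_zero_iff).mpr hx, map_zero]
    · rw [starProjection_eq_self_iff.mpr hx.1, (L.starProjection_apply_eq_zero_iff).mpr hx.2]

theorem orthogonal_range_starProjection_comp_starProjection [CompleteSpace E] :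
    (L.starProjection ∘L K.starProjection).rangeᗮ = Lᗮ ⊔ (L ⊓ Kᗮ) := by
  rw [ContinuousLinearMap.orthogonal_range, ContinuousLinearMap.adjoint_comp,
    (isSelfAdjoint_starProjection K).adjoint_eq, (isSelfAdjoint_starProjection L).adjoint_eq,
    ker_starProjection_comp_starProjection]

end Submodule

theorem projCLM_eq_starProjection {H : Type*} [NormedAddCommGroup H] [InnerProductSpace ℂ H]
    [CompleteSpace H] (W : Submodule ℂ H) (hW : IsClosed (W : Set H))
    [W.HasOrthogonalProjection] : projCLM W hW = W.starProjection :=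
  rfl

theorem stmt_19 {H : Type*} [NormedAddCommGroup H] [InnerProductSpace ℂ H] [CompleteSpace H]
    (M N : Submodule ℂ H) (hM : IsClosed (M : Set H)) (hN : IsClosed (N : Set H)) :
    LinearMap.range (((projCLM Nᗮ (Submodule.isClosed_orthogonal N)).comp (projCLM M hM)) : H →ₗ[ℂ] H)
        = Nᗮ ⊓ (M ⊔ N) ∧
      LinearMap.ker (((projCLM Nᗮ (Submodule.isClosed_orthogonal N)).comp (projCLM M hM)) : H →ₗ[ℂ] H)
        = Mᗮ ⊔ (M ⊓ N) ∧
      (LinearMap.range (((projCLM Nᗮ (Submodule.isClosed_orthogonal N)).comp (projCLM M hM)) : H →ₗ[ℂ] H))ᗮ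
        = N ⊔ (Mᗮ ⊓ Nᗮ) := by
  have : CompleteSpace M := hM.completeSpace_coe
  have : CompleteSpace N := hN.completeSpace_coe
  rw [projCLM_eq_starProjection, projCLM_eq_starProjection,
    M.orthogonal_range_starProjection_comp_starProjection,
    M.range_starProjection_comp_starProjection, M.ker_starProjection_comp_starProjection,
    N.orthogonal_orthogonal, inf_comm Nᗮ Mᗮ]
  exact ⟨rfl, rfl, rfl⟩
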